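/- Let (X,δ) be a finite metric space with at least 2 points, let A ⊆ X, and let rad : A → ℝ be a function such that: (i) rad(x) > 0 for every x ∈ A; (ii) rad(x) ≤ ω(MST(X)) for every x ∈ A; and (iii) for every pair of distinct points x,y ∈ A, δ(x,y) ≥ max(rad(x),rad(y))/5. Then Σ_{x∈A} rad(x) ≤ 11·ω(MST(X)). -/

import Mathlib

/-- The weight of a walk in a graph on a metric space: the sum of distances over
its consecutive-vertex pairs. -/
noncomputable def walkWeight {X : Type*} [MetricSpace X] {G : SimpleGraph X} {u v : X}
    (w : G.Walk u v) : ℝ :=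
  (w.darts.map fun d => dist d.toProd.1 d.toProd.2).sum

/-- `G` is a `t`-spanner for the metric space `X`. -/
def IsTSpanner {X : Type*} [MetricSpace X] (G : SimpleGraph X) (t : ℝ) : Prop :=
  ∀ p q : X, ∃ w : G.Walk p q, walkWeight w ≤ t * dist p q

/-- `G` is a `k`-fault-tolerant `t`-spanner for the metric space `X`. -/
def IsFTSpanner {X : Type*} [MetricSpace X] (G : SimpleGraph X) (k : ℕ) (t : ℝ) : Prop :=
  ∀ F : Finset X, F.card ≤ k → ∀ p q : X, p ∉ F → q ∉ F →
    ∃ w : G.Walk p q, (∀ v ∈ w.support, v ∉ F) ∧ walkWeight w ≤ t * dist p q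

/-- The total weight of a graph on a finite metric space: the sum of `dist u v`
over all edges `{u,v}`. -/
noncomputable def graphWeight {X : Type*} [MetricSpace X] [Finite X] (G : SimpleGraph X) : ℝ :=
  ∑ e ∈ (Set.toFinite G.edgeSet).toFinset,
    Sym2.lift ⟨fun a b => dist a b, fun a b => dist_comm a b⟩ e

/-- The minimum spanning tree weight of a finite metric space: the infimum of the
total weight over all connected spanning subgraphs of the complete graph. -/
noncomputable def mstWeight (X : Type*) [MetricSpace X] [Finite X] : ℝ :=
  sInf {w : ℝ | ∃ G : SimpleGraph X, G.Connected ∧ graphWeight G = w}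

/-- The degree of a vertex in a graph. -/
noncomputable def vdeg {X : Type*} (G : SimpleGraph X) (v : X) : ℕ :=
  {u | G.Adj v u}.ncard

/-- A metric space is `2^d`-doubling if every closed ball of radius `2r` can be covered
by at most `2^d` closed balls of radius `r` centered at points of the space. -/
def IsDoubling (X : Type*) [MetricSpace X] (d : ℕ) : Prop :=
  ∀ (x : X) (r : ℝ), 0 < r → ∃ c : Finset X, c.card ≤ 2 ^ d ∧
    Metric.closedBall x (2 * r) ⊆ ⋃ y ∈ c, Metric.closedBall y r

/-!
Any connected graph `G` on `X` has a closed walk through every point of weight at most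
`2·w(G)`: grow a closed walk by detours along edges leaving its support, paying each edge at
most twice. Listing `A` in order of first visit along that walk, separation gives
`rad x ≤ 5·δ(x, y)` for consecutive points, and by the triangle inequality the consecutive
distances add up to at most the weight of the walk. Hence `Σ rad ≤ 10·w(G) + ω(MST(X))` for
every connected `G`, and taking the infimum over `G` gives `Σ rad ≤ 11·ω(MST(X))`.
-/

section

variable {X : Type*} [MetricSpace X]

noncomputable def edgeLength : Sym2 X → ℝ :=
  Sym2.lift ⟨dist, dist_comm⟩

@[simp] lemma edgeLength_mk (a b : X) : edgeLength s(a, b) = dist a b := rfl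

lemma edgeLength_nonneg (e : Sym2 X) : 0 ≤ edgeLength e := by
  induction e using Sym2.ind with
  | h a b => exact dist_nonneg

namespace List

noncomputable def chainLength : List X → ℝ
  | x :: y :: l => dist x y + chainLength (y :: l)
  | _ => 0

lemma chainLength_cons_le (a b : X) (l : List X) :
    chainLength (a :: l) ≤ dist a b + chainLength (b :: l) := by
  cases l with
  | nil => simp [chainLength]
  | cons y l =>
    simp only [chainLength]
    linarith [dist_triangle a b y]

lemma chainLength_le_cons (a : X) (l : List X) : chainLength l ≤ chainLength (a :: l) := by
  cases l with
  | nil => simp [chainLength]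
  | cons y l =>
    simp only [chainLength]
    linarith [dist_nonneg (x := a) (y := y)]

lemma chainLength_cons_le_cons_of_sublist {l₁ l₂ : List X} (h : l₁ <+ l₂) (a : X) :
    chainLength (a :: l₁) ≤ chainLength (a :: l₂) := by
  induction h generalizing a with
  | slnil => rfl
  | @cons l₁ l₂ b _ ih =>
    calc chainLength (a :: l₁) ≤ dist a b + chainLength (b :: l₁) := chainLength_cons_le a b l₁
    _ ≤ dist a b + chainLength (b :: l₂) := by linarith [ih b]
  | @cons_cons l₁ l₂ b _ ih =>
    simp only [chainLength]
    linarith [ih b]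

lemma chainLength_le_of_sublist {l₁ l₂ : List X} (h : l₁ <+ l₂) :
    chainLength l₁ ≤ chainLength l₂ := by
  induction h with
  | slnil => rfl
  | @cons l₁ l₂ b _ ih => exact ih.trans (chainLength_le_cons b l₂)
  | @cons_cons l₁ l₂ b h _ => exact chainLength_cons_le_cons_of_sublist h b

lemma sum_map_le_mul_chainLength_add {f : X → ℝ} {c B : ℝ} {l : List X}
    (hchain : l.IsChain fun x y => f x ≤ c * dist x y) (hB : ∀ x ∈ l, f x ≤ B) (hB₀ : 0 ≤ B) :
    (l.map f).sum ≤ c * chainLength l + B := by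
  induction hchain with
  | nil => simpa [chainLength] using hB₀
  | singleton a => simpa [chainLength] using hB a (by simp)
  | @cons_cons a b l hab _ ih =>
    have := ih fun x hx => hB x (mem_cons_of_mem a hx)
    simp only [map_cons, sum_cons, chainLength] at this ⊢
    linarith

end List

section Graph

open SimpleGraph

variable {G : SimpleGraph X}

@[simp] lemma walkWeight_cons {u v w : X} (h : G.Adj u v) (p : G.Walk v w) :
    walkWeight (Walk.cons h p) = dist u v + walkWeight p := by
  simp [walkWeight]

lemma walkWeight_append {u v w : X} (p : G.Walk u v) (q : G.Walk v w) :
    walkWeight (p.append q) = walkWeight p + walkWeight q := by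
  simp [walkWeight, Walk.darts_append]

lemma chainLength_support {u v : X} (p : G.Walk u v) : p.support.chainLength = walkWeight p := by
  induction p with
  | nil => simp [List.chainLength, walkWeight]
  | cons h p ih =>
    rw [Walk.support_cons, ← p.cons_tail_support, List.chainLength, Walk.cons_tail_support, ih,
      walkWeight_cons]

lemma exists_detour {u v p z : X} (w : G.Walk u v) (hp : p ∈ w.support) (h : G.Adj p z) :
    ∃ w' : G.Walk u v, w.support ⊆ w'.support ∧ z ∈ w'.support ∧
      walkWeight w' = walkWeight w + 2 * dist p z := by
  classical
  have hsplit := w.take_spec hp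
  refine ⟨(w.takeUntil p hp).append (.cons h (.cons h.symm (w.dropUntil p hp))), ?_, ?_, ?_⟩
  · intro x hx
    rw [← hsplit, Walk.mem_support_append_iff] at hx
    rcases hx with hx | hx <;> simp [Walk.mem_support_append_iff, hx]
  · simp [Walk.mem_support_append_iff]
  · have := congrArg walkWeight hsplit
    rw [walkWeight_append] at this
    rw [walkWeight_append, walkWeight_cons, walkWeight_cons, dist_comm z p]
    linarith

variable [Finite X]

lemma graphWeight_nonneg (G : SimpleGraph X) : 0 ≤ graphWeight G :=
  Finset.sum_nonneg fun e _ => edgeLength_nonneg e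

open scoped Classical in
noncomputable def uncoveredWeight (G : SimpleGraph X) (s : Set X) : ℝ :=
  ∑ e ∈ (Set.toFinite G.edgeSet).toFinset with ¬ ∀ x ∈ e, x ∈ s, edgeLength e

lemma uncoveredWeight_nonneg (G : SimpleGraph X) (s : Set X) : 0 ≤ uncoveredWeight G s :=
  Finset.sum_nonneg fun e _ => edgeLength_nonneg e

lemma uncoveredWeight_le_graphWeight (G : SimpleGraph X) (s : Set X) :
    uncoveredWeight G s ≤ graphWeight G := by
  classical
  exact Finset.sum_le_sum_of_subset_of_nonneg (Finset.filter_subset _ _)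
    fun e _ _ => edgeLength_nonneg e

lemma dist_add_uncoveredWeight_le {s t : Set X} {p z : X} (hst : s ⊆ t) (hpz : G.Adj p z)
    (hz : z ∉ s) (hp : p ∈ t) (hzt : z ∈ t) :
    dist p z + uncoveredWeight G t ≤ uncoveredWeight G s := by
  classical
  unfold uncoveredWeight
  rw [← edgeLength_mk, ← Finset.sum_insert (a := s(p, z)) (by simp [hp, hzt])]
  refine Finset.sum_le_sum_of_subset_of_nonneg ?_ fun e _ _ => edgeLength_nonneg e
  intro e he
  rcases Finset.mem_insert.1 he with rfl | he
  · simp [hpz, hz]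
  · simp only [Finset.mem_filter, Set.Finite.mem_toFinset] at he ⊢
    exact ⟨he.1, fun h => he.2 fun x hx => hst (h x hx)⟩

lemma exists_covering_walk_le (hG : G.Connected) {u : X} (w : G.Walk u u) :
    ∃ w' : G.Walk u u, (∀ v, v ∈ w'.support) ∧
      walkWeight w' ≤ walkWeight w + 2 * uncoveredWeight G {v | v ∈ w.support} := by
  by_cases hcov : ∀ v, v ∈ w.support
  · exact ⟨w, hcov, by linarith [uncoveredWeight_nonneg G {v | v ∈ w.support}]⟩
  obtain ⟨v, hv⟩ := not_forall.1 hcov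
  obtain ⟨q⟩ := hG.preconnected u v
  obtain ⟨d, -, hp, hz⟩ := q.exists_boundary_dart {v | v ∈ w.support} w.start_mem_support hv
  obtain ⟨w₁, hsub, hz₁, hw₁⟩ := exists_detour w hp d.adj
  have hfewer : {v | v ∉ w₁.support}.ncard < {v | v ∉ w.support}.ncard :=
    Set.ncard_lt_ncard ⟨fun x hx hx₁ => hx (hsub hx₁), fun h => h hz hz₁⟩
  obtain ⟨w', hcov', hw'⟩ := exists_covering_walk_le hG w₁
  have := dist_add_uncoveredWeight_le (G := G) (s := {v | v ∈ w.support})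
    (t := {v | v ∈ w₁.support}) (fun x hx => hsub hx) d.adj hz (hsub hp) hz₁
  exact ⟨w', hcov', by linarith⟩
termination_by {v | v ∉ w.support}.ncard

lemma exists_covering_walk_le_two_mul_graphWeight (hG : G.Connected) (u : X) :
    ∃ w : G.Walk u u, (∀ v, v ∈ w.support) ∧ walkWeight w ≤ 2 * graphWeight G := by
  obtain ⟨w, hcov, hw⟩ := exists_covering_walk_le hG (Walk.nil : G.Walk u u)
  have hnil : walkWeight (Walk.nil : G.Walk u u) = 0 := rfl
  have := uncoveredWeight_le_graphWeight G {v | v ∈ (Walk.nil : G.Walk u u).support}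
  exact ⟨w, hcov, by linarith⟩

lemma sum_le_two_mul_graphWeight_add (hG : G.Connected) (A : Finset X) {f : X → ℝ}
    {c B : ℝ} (hc : 0 ≤ c) (hB₀ : 0 ≤ B) (hB : ∀ x ∈ A, f x ≤ B)
    (hsep : ∀ x ∈ A, ∀ y ∈ A, x ≠ y → f x ≤ c * dist x y) :
    ∑ x ∈ A, f x ≤ 2 * c * graphWeight G + B := by
  classical
  obtain ⟨u⟩ := hG.nonempty
  obtain ⟨w, hcov, hw⟩ := exists_covering_walk_le_two_mul_graphWeight hG u
  set l := w.support.dedup.filter (· ∈ A)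
  have hl_mem : ∀ x, x ∈ l ↔ x ∈ A := by simp [l, hcov]
  have hl_nodup : l.Nodup := w.support.nodup_dedup.filter _
  have hl_sub : l.Sublist w.support := List.filter_sublist.trans w.support.dedup_sublist
  have hchain : l.IsChain fun x y => f x ≤ c * dist x y :=
    (hl_nodup.imp_of_mem fun hx hy hxy =>
      hsep _ ((hl_mem _).1 hx) _ ((hl_mem _).1 hy) hxy).isChain
  calc ∑ x ∈ A, f x = (l.map f).sum := by
        rw [← List.sum_toFinset f hl_nodup]
        exact Finset.sum_congr (by ext; simp [hl_mem]) fun _ _ => rfl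
    _ ≤ c * l.chainLength + B :=
        List.sum_map_le_mul_chainLength_add hchain (fun x hx => hB x ((hl_mem x).1 hx)) hB₀
    _ ≤ c * walkWeight w + B := by
        gcongr
        rw [← chainLength_support w]
        exact List.chainLength_le_of_sublist hl_sub
    _ ≤ 2 * c * graphWeight G + B := by nlinarith

end Graph

lemma mstWeight_nonneg [Finite X] : 0 ≤ mstWeight X :=
  Real.sInf_nonneg fun _ ⟨G, _, hG⟩ => hG ▸ graphWeight_nonneg G

lemma le_mstWeight [Finite X] [Nonempty X] {c : ℝ}
    (h : ∀ G : SimpleGraph X, G.Connected → c ≤ graphWeight G) : c ≤ mstWeight X :=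
  le_csInf ⟨_, ⊤, SimpleGraph.connected_top, rfl⟩ fun _ ⟨G, hG, hw⟩ => hw ▸ h G hG

end

theorem separated_radii_sum_le_general {X : Type*} [MetricSpace X] [Fintype X]
    (A : Finset X) (rad : X → ℝ)
    (hle : ∀ x ∈ A, rad x ≤ mstWeight X)
    (hsep : ∀ x ∈ A, ∀ y ∈ A, x ≠ y → max (rad x) (rad y) / 5 ≤ dist x y) :
    ∑ x ∈ A, rad x ≤ 11 * mstWeight X := by
  have hW : 0 ≤ mstWeight X := mstWeight_nonneg
  rcases isEmpty_or_nonempty X with hX | hX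
  · simp [Finset.eq_empty_of_isEmpty A, hW]
  have hrad : ∀ x ∈ A, ∀ y ∈ A, x ≠ y → rad x ≤ 5 * dist x y := fun x hx y hy hxy => by
    linarith [hsep x hx y hy hxy, le_max_left (rad x) (rad y)]
  have : (∑ x ∈ A, rad x - mstWeight X) / 10 ≤ mstWeight X := le_mstWeight fun G hG => by
    linarith [sum_le_two_mul_graphWeight_add hG A (by norm_num) hW hle hrad]
  linarith

/-- The charging argument following Lemma 4.2 of the paper: if the points of `A` carry
positive radii, each at most `ω(MST(X))`, and any two distinct points of `A` are at
distance at least a fifth of the larger radius, then `Σ_{x∈A} rad(x) ≤ 11·ω(MST(X))`. -/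
theorem separated_radii_sum_le {X : Type*} [MetricSpace X] [Fintype X]
    (hcard : 2 ≤ Fintype.card X)
    (A : Finset X) (rad : X → ℝ)
    (hpos : ∀ x ∈ A, 0 < rad x)
    (hle : ∀ x ∈ A, rad x ≤ mstWeight X)
    (hsep : ∀ x ∈ A, ∀ y ∈ A, x ≠ y → max (rad x) (rad y) / 5 ≤ dist x y) :
    ∑ x ∈ A, rad x ≤ 11 * mstWeight X :=
  separated_radii_sum_le_general A rad hle hsep
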